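/- arXiv:1601.07131 — 2 statements merged into one kernel-verified Lean document; each statement's English description precedes it below -/
import Mathlib

section
/- Let B be a left brace such that (B,+) is torsion-free and the socle soc(B) has finite index in (B,·). If the multiplicative group (B,·) is an Engel group, then B is trivial, i.e. a·b = a + b for all a,b ∈ B. -/
/-- A left brace: an abelian group `(B,+)` and a group `(B,·)` with the
compatibility law `a·(b+c) + a = a·b + a·c`. -/
class LeftBrace (B : Type*) extends AddCommGroup B, Group B where
  left_compat : ∀ a b c : B, a * (b + c) + a = a * b + a * c

variable {B : Type*} [LeftBrace B]

/-- The star operation `a * b = a·b - a - b` of a left brace. -/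
def bstar (a b : B) : B := a * b - a - b

/-- The map `L_a : b ↦ a·b - a`. -/
def lmap (a b : B) : B := a * b - a

/-- The socle of a left brace. -/
def socle (B : Type*) [LeftBrace B] : Set B := {a : B | ∀ b : B, a * b = a + b}

/-- Iterated star products: `eStar a b m = a*(a*(⋯*(a*b)))` with `a` occurring `m` times. -/
def eStar (a : B) (b : B) : ℕ → B
  | 0 => b
  | k + 1 => bstar a (eStar a b k)

/-- The additive subgroup generated by all `a*c` with `a ∈ A`, `c ∈ C`. -/
def starSub (A C : AddSubgroup B) : AddSubgroup B :=
  AddSubgroup.closure {x : B | ∃ a ∈ A, ∃ c ∈ C, x = bstar a c}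

/-- Rump's left chain: `leftPow B n = B^{n+1}`, i.e. `B^1 = B`, `B^{n+1} = B * B^n`. -/
def leftPow (B : Type*) [LeftBrace B] : ℕ → AddSubgroup B
  | 0 => ⊤
  | n + 1 => starSub ⊤ (leftPow B n)

/-- Rump's right chain: `rightPow B n = B^{(n+1)}`, i.e. `B^{(1)} = B`, `B^{(n+1)} = B^{(n)} * B`. -/
def rightPow (B : Type*) [LeftBrace B] : ℕ → AddSubgroup B
  | 0 => ⊤
  | n + 1 => starSub (rightPow B n) ⊤

/-- The commutator `[g,h] = g⁻¹h⁻¹gh`. -/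
def pcomm {G : Type*} [Group G] (g h : G) : G := g⁻¹ * h⁻¹ * g * h

/-- Iterated commutator `engel g h n = [[…[[g,h],h]…],h]` with `h` occurring `n` times. -/
def engel {G : Type*} [Group G] (g h : G) : ℕ → G
  | 0 => g
  | k + 1 => pcomm (engel g h k) h

/-- A group is Engel if every iterated commutator eventually vanishes. -/
def IsEngelGroup (G : Type*) [Group G] : Prop :=
  ∀ g h : G, ∃ n : ℕ, 0 < n ∧ engel g h n = 1

lemma lmap_add (a b c : B) : lmap a (b + c) = lmap a b + lmap a c := by
  have h2 : a * (b + c) = a * b + a * c - a := eq_sub_of_add_eq (LeftBrace.left_compat a b c)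
  simp only [lmap, h2]; abel

lemma lmap_mul (a b c : B) : lmap (a * b) c = lmap a (lmap b c) := by
  have h := LeftBrace.left_compat a (b * c - b) b
  rw [sub_add_cancel] at h
  have h2 : a * (b * c) = a * (b * c - b) + a * b - a := eq_sub_of_add_eq h
  simp only [lmap, mul_assoc, h2]; abel

lemma one_eq_zero : (1 : B) = 0 := by
  have h := lmap_mul (1 : B) 1 1
  simp only [lmap, one_mul, mul_one, sub_self, zero_sub] at h
  simpa using h.symm

lemma mul_eq_add_lmap (a b : B) : a * b = a + lmap a b := by
  rw [lmap]; abel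

lemma lmap_one_apply (b : B) : lmap 1 b = b := by
  rw [lmap, one_mul, one_eq_zero, sub_zero]

lemma lmap_zero (a : B) : lmap a 0 = 0 := by
  have h := lmap_add a 0 0
  rw [add_zero] at h
  exact add_eq_left.mp h.symm

lemma lmap_nsmul (a : B) (n : ℕ) (b : B) : lmap a (n • b) = n • lmap a b := by
  induction n with
  | zero => simpa using lmap_zero a
  | succ k ih => rw [succ_nsmul, lmap_add, ih, succ_nsmul]

lemma soc_lmap {s : B} (hs : s ∈ socle B) (b : B) : lmap s b = b := by
  rw [lmap, hs b]; abel

lemma lmap_inv_cancel (a b : B) : lmap a⁻¹ (lmap a b) = b := by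
  rw [← lmap_mul, inv_mul_cancel, lmap_one_apply]

lemma soc_mul_mem {s t : B} (hs : s ∈ socle B) (ht : t ∈ socle B) : s * t ∈ socle B := by
  intro b
  rw [mul_assoc, ht b, hs (t + b), hs t]; abel

lemma soc_inv_mem {s : B} (hs : s ∈ socle B) : s⁻¹ ∈ socle B := by
  intro b
  have h1 : lmap s⁻¹ b = b := by
    conv_lhs => rw [← soc_lmap hs b, lmap_inv_cancel]
  rw [mul_eq_add_lmap, h1]

lemma soc_inv_eq_neg {s : B} (hs : s ∈ socle B) : s⁻¹ = -s := by
  have h := mul_eq_add_lmap s s⁻¹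
  rw [mul_inv_cancel, soc_lmap hs, one_eq_zero] at h
  exact eq_neg_of_add_eq_zero_right h.symm

lemma conj_mem_socle {s : B} (hs : s ∈ socle B) (g : B) : g * s * g⁻¹ ∈ socle B := by
  intro b
  have hl : lmap (g * s * g⁻¹) b = b := by
    rw [lmap_mul, lmap_mul, soc_lmap hs, ← lmap_mul, mul_inv_cancel, lmap_one_apply]
  rw [mul_eq_add_lmap, hl]

lemma conj_eq_lmap {s : B} (hs : s ∈ socle B) (g : B) : g * s * g⁻¹ = lmap g s := by
  have ht := conj_mem_socle hs g
  have h1 : (g * s * g⁻¹) + g = g * s := by rw [← ht g]; group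
  rw [lmap]; exact eq_sub_of_add_eq h1

lemma lmap_mem_socle {s : B} (hs : s ∈ socle B) (g : B) : lmap g s ∈ socle B :=
  conj_eq_lmap hs g ▸ conj_mem_socle hs g

lemma rel_iff (x y : B) : x⁻¹ * y ∈ socle B ↔ y - x ∈ socle B := by
  constructor
  · intro hxy
    have h : y = x + lmap x (x⁻¹ * y) := by rw [← mul_eq_add_lmap, mul_inv_cancel_left]
    have h2 : y - x = lmap x (x⁻¹ * y) := sub_eq_iff_eq_add'.mpr h
    rw [h2]; exact lmap_mem_socle hxy x
  · intro hyx
    have h1 : x⁻¹ * y = lmap x⁻¹ (y - x) := by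
      calc x⁻¹ * y = x⁻¹ + lmap x⁻¹ y := mul_eq_add_lmap _ _
        _ = x⁻¹ + lmap x⁻¹ ((y - x) + x) := by rw [sub_add_cancel]
        _ = (x⁻¹ + lmap x⁻¹ x) + lmap x⁻¹ (y - x) := by rw [lmap_add]; abel
        _ = (x⁻¹ * x) + lmap x⁻¹ (y - x) := by rw [← mul_eq_add_lmap]
        _ = lmap x⁻¹ (y - x) := by rw [inv_mul_cancel, one_eq_zero, zero_add]
    rw [h1]; exact lmap_mem_socle hyx x⁻¹


lemma pcomm_socle {s : B} (hs : s ∈ socle B) (h : B) :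
    pcomm s h = lmap h⁻¹ s - s ∧ pcomm s h ∈ socle B := by
  have hconj : h⁻¹ * s * h = lmap h⁻¹ s := by
    have := conj_eq_lmap hs h⁻¹
    rwa [inv_inv] at this
  have h1 : pcomm s h = s⁻¹ * lmap h⁻¹ s := by
    rw [pcomm, ← hconj]; simp [mul_assoc]
  have hmem : s⁻¹ * lmap h⁻¹ s ∈ socle B :=
    soc_mul_mem (soc_inv_mem hs) (lmap_mem_socle hs h⁻¹)
  constructor
  · rw [h1, (soc_inv_mem hs) (lmap h⁻¹ s), soc_inv_eq_neg hs]; abel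
  · rw [h1]; exact hmem

lemma engel_socle {s : B} (hs : s ∈ socle B) (h : B) (n : ℕ) :
    engel s h n ∈ socle B ∧ engel s h n = (fun x => lmap h⁻¹ x - x)^[n] s := by
  induction n with
  | zero => exact ⟨hs, rfl⟩
  | succ k ih =>
    obtain ⟨hm, he⟩ := ih
    have hp := pcomm_socle hm h
    refine ⟨hp.2, ?_⟩
    rw [show engel s h (k+1) = pcomm (engel s h k) h from rfl, hp.1,
      Function.iterate_succ_apply', ← he]

lemma eigen_zero {g y x : B} {N : ℕ} (hN : N ≠ 0)
    (htf : ∀ (z : B) (k : ℕ), 0 < k → k • z = 0 → z = 0)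
    (hgN : ∀ z : B, lmap (g ^ N) z = z)
    (hy : y = lmap g x - x) (hfix : lmap g y = y) : y = 0 := by
  have hgx : lmap g x = x + y := by rw [hy]; abel
  have key : ∀ k : ℕ, lmap (g ^ k) x = x + k • y := by
    intro k
    induction k with
    | zero => simp [pow_zero, lmap_one_apply]
    | succ m ih =>
      rw [pow_succ', lmap_mul, ih, lmap_add, lmap_nsmul, hgx, hfix, succ_nsmul]
      abel
  have h1 := key N
  rw [hgN x] at h1
  have h2 : N • y = 0 := (left_eq_add.mp h1)
  exact htf y N (Nat.pos_of_ne_zero hN) h2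

lemma iterate_zero_imp {g : B} {N : ℕ} (hN : N ≠ 0)
    (htf : ∀ (z : B) (k : ℕ), 0 < k → k • z = 0 → z = 0)
    (hgN : ∀ z : B, lmap (g ^ N) z = z) :
    ∀ (n : ℕ) (x : B), (fun x => lmap g x - x)^[n] x = 0 → lmap g x - x = 0 := by
  intro n
  induction n with
  | zero => intro x hx; simp only [Function.iterate_zero, id] at hx; rw [hx, lmap_zero]; abel
  | succ m ih =>
    intro x hx
    rw [Function.iterate_succ_apply] at hx
    have h2 := ih _ hx
    exact eigen_zero hN htf hgN rfl (sub_eq_zero.mp h2)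


theorem stmt5 {B : Type*} [LeftBrace B]
    (htf : ∀ (x : B) (k : ℕ), 0 < k → k • x = 0 → x = 0)
    (H : Subgroup B) (hH : (H : Set B) = socle B) (hfi : H.FiniteIndex)
    (hE : IsEngelGroup B) :
    ∀ a b : B, a * b = a + b := by
  haveI hnorm : H.Normal := by
    constructor
    intro n hn g
    have hns : n ∈ socle B := by rw [← hH]; exact hn
    have h := conj_mem_socle hns g
    rw [← hH] at h; exact h
  have hN0 : H.index ≠ 0 := hfi.index_ne_zero
  have hsocfix : ∀ (g s : B), s ∈ socle B → lmap g s = s := by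
    intro g s hs
    obtain ⟨n, hn, he⟩ := hE s g⁻¹
    have h2 := (engel_socle hs g⁻¹ n).2
    rw [he, one_eq_zero] at h2
    simp only [inv_inv] at h2
    have hgN : ∀ z : B, lmap (g ^ H.index) z = z := by
      intro z
      have hmem : g ^ H.index ∈ socle B := by rw [← hH]; exact H.pow_index_mem g
      exact soc_lmap hmem z
    exact sub_eq_zero.mp (iterate_zero_imp hN0 htf hgN n s h2.symm)
  have hsmul : ∀ b : B, ∃ n : ℕ, 0 < n ∧ n • b ∈ socle B := by
    intro b
    have main : ∀ k l : ℕ, k < l → ((k • b : B) : B ⧸ H) = ((l • b : B) : B ⧸ H) →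
        ∃ n : ℕ, 0 < n ∧ n • b ∈ socle B := by
      intro k l hkl heq
      have hmem : (k • b)⁻¹ * (l • b) ∈ H := QuotientGroup.eq.mp heq
      have hsoc : (k • b)⁻¹ * (l • b) ∈ socle B := by rw [← hH]; exact hmem
      have hsub : (l • b) - (k • b) ∈ socle B := (rel_iff _ _).mp hsoc
      refine ⟨l - k, Nat.sub_pos_of_lt hkl, ?_⟩
      rw [sub_nsmul b hkl.le, ← sub_eq_add_neg]
      exact hsub
    haveI : Finite (B ⧸ H) := H.finite_quotient_of_finiteIndex
    obtain ⟨k, l, hkl, heq⟩ := Finite.exists_ne_map_eq_of_infinite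
      (fun n : ℕ => ((n • b : B) : B ⧸ H))
    rcases Nat.lt_trichotomy k l with h | h | h
    · exact main k l h heq
    · exact absurd h hkl
    · exact main l k h heq.symm
  intro a b
  obtain ⟨n, hn, hnb⟩ := hsmul b
  have h1 : lmap a (n • b) = n • b := hsocfix a _ hnb
  rw [lmap_nsmul] at h1
  have h2 : n • (lmap a b - b) = 0 := by rw [nsmul_sub, h1, sub_self]
  have h4 : lmap a b = b := sub_eq_zero.mp (htf _ n hn h2)
  rw [mul_eq_add_lmap, h4]
end

section
/- Let (X,r) be a finite non-degenerate involutive set-theoretic solution of the Yang–Baxter equation. If the structure group G(X,r) is an Engel group, then (X,r) is the trivial solution. -/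
variable {B : Type*} [LeftBrace B]

def r12 {X : Type*} (r : X × X → X × X) : X × X × X → X × X × X :=
  fun p => ((r (p.1, p.2.1)).1, (r (p.1, p.2.1)).2, p.2.2)

def r23 {X : Type*} (r : X × X → X × X) : X × X × X → X × X × X :=
  fun p => (p.1, r p.2)

/-- A non-degenerate involutive set-theoretic solution of the Yang–Baxter equation. -/
structure YBSolution (X : Type u) where
  r : X × X → X × X
  ybe : r12 r ∘ r23 r ∘ r12 r = r23 r ∘ r12 r ∘ r23 r
  nondegL : ∀ x : X, Function.Bijective fun y => (r (x, y)).1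
  nondegR : ∀ y : X, Function.Bijective fun x => (r (x, y)).2
  involutive : ∀ p : X × X, r (r p) = p

/-- `G`, with its left brace structure and the map `ι : X → G`, is the structure group
`G(X,r)` with its canonical left brace structure: `ι` is injective, `(G,+)` is free
abelian with basis `ι(X)`, `ˣy = L_x(y)` holds, the defining relations hold, and `G`
has the universal property of the group presented by these relations. -/
structure IsCanonicalBrace {X : Type u} (sol : YBSolution X) (G : Type u) [LeftBrace G]
    (ι : X → G) : Prop where
  inj : Function.Injective ι
  basis : ∃ b : Module.Basis X ℤ G, ∀ x : X, b x = ι x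
  act : ∀ x y : X, lmap (ι x) (ι y) = ι (sol.r (x, y)).1
  rel : ∀ x y : X, ι x * ι y = ι (sol.r (x, y)).1 * ι (sol.r (x, y)).2
  univ : ∀ {H : Type u} [Group H] (f : X → H),
    (∀ x y : X, f x * f y = f (sol.r (x, y)).1 * f (sol.r (x, y)).2) →
    ∃! φ : G →* H, ∀ x : X, φ (ι x) = f x

/-!
Write `λ_g = lmap g`. For `s` in the socle, `[s, g] = λ_{g⁻¹}(s) - s`, so the Engel condition
makes `λ_{g⁻¹} - 1` nilpotent on `s`. Each `λ_g` permutes the basis `X` of the free abelian group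
`(G, +)`, hence has finite order, and a unipotent automorphism of finite order of a torsion-free
group is trivial on `s`: every `λ_g` fixes the socle pointwise. Since `λ` takes finitely many
values, some nonzero multiple `m • a` of every `a` lies in the socle, so `m • (λ_g a - a) = 0` and
`λ` is trivial. Thus `σ_x(y) = y`, and involutivity forces `r(x, y) = (y, x)`.
-/

theorem Module.End.apply_eq_self_of_pow_sub_one_apply_eq_zero {R M : Type*} [Semiring R]
    [AddCommGroup M] [Module R M] [IsAddTorsionFree M] {f : Module.End R M}
    (hf : IsOfFinOrder f) {n : ℕ} {a : M} (h : ((f - 1) ^ n) a = 0) : f a = a := by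
  induction n generalizing a with
  | zero => simp_all
  | succ n ih =>
    rw [pow_succ, Module.End.mul_apply] at h
    set c := f a - a
    have hc : f c = c := ih h
    have hpow : ∀ k : ℕ, (f ^ k) a = a + k • c := by
      intro k
      induction k with
      | zero => simp
      | succ k ih =>
        rw [pow_succ', Module.End.mul_apply, ih, map_add, map_nsmul, hc, succ_nsmul]
        simp only [c]
        abel
    obtain ⟨d, hd, hfd⟩ := hf.exists_pow_eq_one
    have hdc : d • c = 0 := by simpa [hfd] using hpow d
    rw [← sub_eq_zero]
    exact (nsmul_eq_zero_iff_right hd.ne').1 hdc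

namespace Module.Basis

variable {ι R M : Type*} [Semiring R] [AddCommMonoid M] [Module R M] (b : Basis ι R M)

noncomputable def equivHom : Equiv.Perm ι →* (M ≃ₗ[R] M) where
  toFun e := b.equiv b e
  map_one' := b.equiv_refl
  map_mul' e₁ e₂ := by rw [LinearEquiv.mul_eq_trans, b.equiv_trans]; rfl

theorem equivHom_apply (e : Equiv.Perm ι) (i : ι) : b.equivHom e (b i) = b (e i) :=
  b.equiv_apply i b e

end Module.Basis

namespace LeftBrace

theorem mul_add_eq (a b c : B) : a * (b + c) = a * b + a * c - a :=
  eq_sub_of_add_eq (left_compat a b c)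

protected theorem mul_zero (a : B) : a * 0 = a := by
  have h := left_compat a 0 0
  rw [add_zero] at h
  exact (add_left_cancel h).symm

theorem zero_eq_one : (0 : B) = 1 := by
  simpa using LeftBrace.mul_zero (1 : B)

theorem mul_eq_add_lmap (a b : B) : a * b = a + lmap a b := by
  rw [lmap, add_sub_cancel]

theorem lmap_add (a b c : B) : lmap a (b + c) = lmap a b + lmap a c := by
  simp only [lmap, mul_add_eq]
  abel

theorem lmap_one (b : B) : lmap 1 b = b := by
  rw [lmap, one_mul, ← zero_eq_one, sub_zero]

theorem lmap_mul (a b c : B) : lmap (a * b) c = lmap a (lmap b c) := by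
  have h := mul_add_eq a (b * c - b) b
  rw [sub_add_cancel] at h
  simp only [lmap, mul_assoc, h]
  abel

theorem lmap_inv_lmap (a b : B) : lmap a⁻¹ (lmap a b) = b := by
  rw [← lmap_mul, inv_mul_cancel, lmap_one]

theorem lmap_lmap_inv (a b : B) : lmap a (lmap a⁻¹ b) = b := by
  rw [← lmap_mul, mul_inv_cancel, lmap_one]

variable (B) in
def lambda : B →* (B ≃ₗ[ℤ] B) where
  toFun a := AddEquiv.toIntLinearEquiv
    { toFun := lmap a
      invFun := lmap a⁻¹
      left_inv := lmap_inv_lmap a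
      right_inv := lmap_lmap_inv a
      map_add' := lmap_add a }
  map_one' := LinearEquiv.ext lmap_one
  map_mul' a b := LinearEquiv.ext (lmap_mul a b)

@[simp]
theorem lambda_apply (a b : B) : lambda B a b = lmap a b := rfl

theorem mem_socle_iff {a : B} : a ∈ socle B ↔ lambda B a = 1 := by
  simp only [socle, Set.mem_ofPred_eq, LinearEquiv.ext_iff, lambda_apply, LinearEquiv.coe_one,
    id_eq, mul_eq_add_lmap, add_right_inj]

variable {s : B}

theorem inv_eq_neg_of_mem_socle (hs : s ∈ socle B) : s⁻¹ = -s :=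
  inv_eq_of_mul_eq_one_right (by rw [hs, add_neg_cancel, zero_eq_one])

theorem mul_mul_inv_of_mem_socle (hs : s ∈ socle B) (g : B) : g * s * g⁻¹ = lmap g s := by
  rw [mul_assoc, hs, mul_add_eq, mul_inv_cancel, ← zero_eq_one, add_zero, lmap]

theorem pcomm_of_mem_socle (hs : s ∈ socle B) (g : B) : pcomm s g = lmap g⁻¹ s - s := by
  have hs' : s⁻¹ ∈ socle B := by
    rw [mem_socle_iff, map_inv, mem_socle_iff.1 hs, inv_one]
  have hconj := mul_mul_inv_of_mem_socle hs g⁻¹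
  rw [inv_inv] at hconj
  rw [pcomm, mul_assoc s⁻¹, mul_assoc s⁻¹, hconj, hs',
    inv_eq_neg_of_mem_socle hs, neg_add_eq_sub]

theorem engel_mem_socle (hs : s ∈ socle B) (g : B) (n : ℕ) : engel s g n ∈ socle B := by
  induction n with
  | zero => exact hs
  | succ n ih =>
    rw [mem_socle_iff] at ih ⊢
    simp [engel, pcomm, ih]

theorem engel_of_mem_socle (hs : s ∈ socle B) (g : B) (n : ℕ) :
    engel s g n = (((lambda B g⁻¹ : Module.End ℤ B) - 1) ^ n) s := by
  induction n with
  | zero => rfl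
  | succ n ih =>
    rw [engel, pcomm_of_mem_socle (engel_mem_socle hs g n), ih, pow_succ', Module.End.mul_apply]
    rfl

section TorsionFree

variable [IsAddTorsionFree B] [Finite (lambda B).range]

theorem lmap_eq_self_of_mem_socle (hE : IsEngelGroup B) {s : B} (hs : s ∈ socle B) (g : B) :
    lmap g s = s := by
  obtain ⟨n, -, hn⟩ := hE s g⁻¹
  rw [engel_of_mem_socle hs, inv_inv, ← zero_eq_one] at hn
  have hfin : IsOfFinOrder (lambda B g : Module.End ℤ B) :=
    LinearEquiv.automorphismGroup.toLinearMapMonoidHom.isOfFinOrder <|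
      (lambda B).range.subtype.isOfFinOrder (isOfFinOrder_of_finite ((lambda B).rangeRestrict g))
  exact Module.End.apply_eq_self_of_pow_sub_one_apply_eq_zero hfin hn

theorem exists_zsmul_mem_socle (hE : IsEngelGroup B) (a : B) :
    ∃ m : ℤ, m ≠ 0 ∧ m • a ∈ socle B := by
  obtain ⟨i, j, hij, heq⟩ :=
    Finite.exists_ne_map_eq_of_infinite fun k : ℤ => (lambda B).rangeRestrict (k • a)
  set s := (i • a)⁻¹ * (j • a)
  have hs : s ∈ socle B := by
    rw [mem_socle_iff, map_mul, map_inv, inv_mul_eq_one]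
    exact congrArg Subtype.val heq
  -- `λ` fixes the socle, so `(i • a) * s = i • a + s`
  have hadd : i • a + s = j • a := by
    rw [← lmap_eq_self_of_mem_socle hE hs (i • a), ← mul_eq_add_lmap, mul_inv_cancel_left]
  refine ⟨j - i, sub_ne_zero.2 hij.symm, ?_⟩
  convert hs using 1
  rw [sub_zsmul, ← hadd]
  abel

theorem lmap_eq_self_of_isEngelGroup (hE : IsEngelGroup B) (g a : B) : lmap g a = a := by
  obtain ⟨m, hm, hma⟩ := exists_zsmul_mem_socle hE a
  have h := lmap_eq_self_of_mem_socle hE hma g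
  rw [← lambda_apply, map_zsmul, lambda_apply] at h
  exact zsmul_right_injective hm h

end TorsionFree

end LeftBrace

namespace IsCanonicalBrace

variable {X : Type u} {sol : YBSolution X} {G : Type u} [LeftBrace G] {ι : X → G}

theorem isAddTorsionFree (hG : IsCanonicalBrace sol G ι) : IsAddTorsionFree G := by
  obtain ⟨b, -⟩ := hG.basis
  exact b.repr.injective.isAddTorsionFree b.repr.toAddMonoidHom

theorem finite_range_lambda [Finite X] (hG : IsCanonicalBrace sol G ι) :
    Finite (LeftBrace.lambda G).range := by
  obtain ⟨b, hb⟩ := hG.basis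
  let σ : X → Equiv.Perm X := fun x => Equiv.ofBijective _ (sol.nondegL x)
  have hσ : ∀ x y, ι (σ x y) = lmap (ι x) (ι y) := fun x y => (hG.act x y).symm
  have hσ_rel : ∀ x y, σ x * σ y = σ (sol.r (x, y)).1 * σ (sol.r (x, y)).2 := by
    intro x y
    ext z
    apply hG.inj
    simp only [Equiv.Perm.mul_apply, hσ, ← LeftBrace.lmap_mul]
    rw [hG.rel]
  obtain ⟨φ, hφ, -⟩ := hG.univ σ hσ_rel
  have hlambda : LeftBrace.lambda G = b.equivHom.comp φ := by
    obtain ⟨_, -, huniq⟩ := hG.univ (fun x => LeftBrace.lambda G (ι x))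
      (fun x y => by rw [← map_mul, ← map_mul, hG.rel])
    refine (huniq _ fun _ => rfl).trans (huniq _ fun x => b.ext' fun y => ?_).symm
    rw [MonoidHom.comp_apply, hφ, Module.Basis.equivHom_apply, hb, hb, LeftBrace.lambda_apply, hσ]
  have hsub : Set.range (LeftBrace.lambda G) ⊆ Set.range b.equivHom := by
    rw [hlambda]
    exact Set.range_comp_subset_range φ b.equivHom
  exact Finite.Set.subset _ hsub

end IsCanonicalBrace

theorem YBSolution.r_eq_swap_of_fst_eq {X : Type u} (sol : YBSolution X)
    (h : ∀ x y, (sol.r (x, y)).1 = y) (p : X × X) : sol.r p = (p.2, p.1) := by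
  obtain ⟨x, y⟩ := p
  have hr : sol.r (x, y) = (y, (sol.r (x, y)).2) := Prod.ext (h x y) rfl
  have hinv := sol.involutive (x, y)
  rw [hr] at hinv
  have hx : (sol.r (x, y)).2 = x := by rw [← h y (sol.r (x, y)).2, hinv]
  rw [hr, hx]

theorem stmt10 {X : Type u} [Finite X] (sol : YBSolution X)
    {G : Type u} [LeftBrace G] (ι : X → G) (hG : IsCanonicalBrace sol G ι)
    (hE : IsEngelGroup G) :
    ∀ p : X × X, sol.r p = (p.2, p.1) := by
  have := hG.isAddTorsionFree
  have := hG.finite_range_lambda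
  refine sol.r_eq_swap_of_fst_eq fun x y => hG.inj ?_
  rw [← hG.act, LeftBrace.lmap_eq_self_of_isEngelGroup hE]
end
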